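/- Any permutation π of n elements can be sorted to the identity by at most n − lis(π) monotone block moves. -/

import Mathlib

/-!
Regard an increasing subsequence as the set `T` of its values: the elements of `T` occur in
increasing order. It suffices to show that while some element lies outside `T`, one can add
such an element `u` to `T` at the cost of at most one monotone block move; starting from a
longest increasing subsequence this takes `n - lis π` steps. Let `u` be the first element
preceded by a larger element of `T` (so `u ∉ T`), and let `B` be the maximal run of elements
larger than `u` just before `u`. Every element of `T` before `B` is smaller than `u`, because
the element just before `B` is smaller than `u` and, by the choice of `u`, larger than every
earlier element of `T`; every element of `T` after `u` exceeds that larger element of `T`.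
So moving `u` in front of `B` is monotone and makes `T ∪ {u}` increasing. If no such `u`
exists, the same applies to the reversed list with the reversed order, and if neither exists,
every `u ∉ T` already fits into `T`.
-/

/-- The identity permutation of `{1,…,n}` as a list `[1, 2, …, n]`. -/
def idL (n : ℕ) : List ℕ := (List.range n).map (· + 1)

/-- `l` is a permutation of `{1,…,n}` (written as a list). -/
def IsPermList (n : ℕ) (l : List ℕ) : Prop := l.Perm (idL n)

/-- The extension of `π` by `π₀ = 0` and `π_{n+1} = n+1`. -/
def ext (n : ℕ) (l : List ℕ) : List ℕ := 0 :: (l ++ [n + 1])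

/-- Number of adjacent pairs of the extended permutation satisfying `p`. -/
def adjCount (p : ℕ → ℕ → Bool) (n : ℕ) (l : List ℕ) : ℕ :=
  ((ext n l).zip (ext n l).tail).countP (fun q => p q.1 q.2)

/-- Number of breakpoints: adjacent pairs with `π_{i+1} ≠ π_i + 1`. -/
def bp (n : ℕ) (l : List ℕ) : ℕ := adjCount (fun a b => b ≠ a + 1) n l

/-- Number of descents: adjacent pairs with `π_i > π_{i+1}`. -/
def des (n : ℕ) (l : List ℕ) : ℕ := adjCount (fun a b => b < a) n l

/-- Number of gaps: adjacent pairs with `π_{i+1} > π_i + 1`. -/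
def gap (n : ℕ) (l : List ℕ) : ℕ := adjCount (fun a b => a + 1 < b) n l

/-- Number of inverse descents: pairs of positions `i < j` with `π_i = π_j + 1`. -/
def invDes (l : List ℕ) : ℕ :=
  (Finset.univ.filter (fun p : Fin l.length × Fin l.length =>
    (p.1 : ℕ) < (p.2 : ℕ) ∧ l.get p.1 = l.get p.2 + 1)).card

/-- Number of inverse gaps: pairs of positions with `i > j + 1` and `π_i = π_j + 1`. -/
def invGap (l : List ℕ) : ℕ :=
  (Finset.univ.filter (fun p : Fin l.length × Fin l.length =>
    (p.2 : ℕ) + 1 < (p.1 : ℕ) ∧ l.get p.1 = l.get p.2 + 1)).card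

/-- `l'` is obtained from `l` by a block move: exchanging two nonempty
consecutive blocks `B` and `C`. -/
def IsBlockMove (l l' : List ℕ) : Prop :=
  ∃ A B C D : List ℕ, B ≠ [] ∧ C ≠ [] ∧ l = A ++ B ++ C ++ D ∧ l' = A ++ C ++ B ++ D

/-- A monotone block move: every element of the first (left) exchanged block
exceeds every element of the second (right) exchanged block. -/
def IsMonotoneBlockMove (l l' : List ℕ) : Prop :=
  ∃ A B C D : List ℕ, B ≠ [] ∧ C ≠ [] ∧ (∀ x ∈ B, ∀ y ∈ C, y < x) ∧
    l = A ++ B ++ C ++ D ∧ l' = A ++ C ++ B ++ D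

/-- A single-element block move: one of the two exchanged blocks has size one. -/
def IsSingleBlockMove (l l' : List ℕ) : Prop :=
  ∃ A B C D : List ℕ, B ≠ [] ∧ C ≠ [] ∧ (B.length = 1 ∨ C.length = 1) ∧
    l = A ++ B ++ C ++ D ∧ l' = A ++ C ++ B ++ D

/-- A monotone single-element block move. -/
def IsMonoSingleBlockMove (l l' : List ℕ) : Prop :=
  ∃ A B C D : List ℕ, B ≠ [] ∧ C ≠ [] ∧ (B.length = 1 ∨ C.length = 1) ∧
    (∀ x ∈ B, ∀ y ∈ C, y < x) ∧ l = A ++ B ++ C ++ D ∧ l' = A ++ C ++ B ++ D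

/-- `l` can be transformed into `target` by `t` moves of type `R`. -/
def SortsIn (R : List ℕ → List ℕ → Prop) (l target : List ℕ) (t : ℕ) : Prop :=
  ∃ c : ℕ → List ℕ, c 0 = l ∧ c t = target ∧ ∀ i < t, R (c i) (c (i + 1))

/-- Length of the longest increasing subsequence of `l`. -/
def lis (l : List ℕ) : ℕ :=
  ((l.sublists.filter (fun s => decide (List.IsChain (· < ·) s))).map List.length).foldr max 0

namespace List

variable {α : Type*}

theorem pairwise_or_exists_first_violation (R : α → α → Prop) (l : List α) :
    l.Pairwise R ∨ ∃ P u Q, l = P ++ u :: Q ∧ P.Pairwise R ∧ ∃ s ∈ P, ¬ R s u := by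
  induction l using List.reverseRecOn with
  | nil => exact Or.inl .nil
  | append_singleton l x ih =>
    rcases ih with hl | ⟨P, u, Q, rfl, hP, hs⟩
    · by_cases hx : ∀ s ∈ l, R s x
      · refine Or.inl (pairwise_append.2 ⟨hl, pairwise_singleton _ _, fun s hs y hy => ?_⟩)
        exact mem_singleton.1 hy ▸ hx s hs
      · push Not at hx
        exact Or.inr ⟨l, x, [], rfl, hl, hx⟩
    · exact Or.inr ⟨P, u, Q ++ [x], by simp, hP, hs⟩

theorem pairwise_or_exists_last_violation (R : α → α → Prop) (l : List α) :
    l.Pairwise R ∨ ∃ P u Q, l = P ++ u :: Q ∧ Q.Pairwise R ∧ ∃ s ∈ Q, ¬ R u s := by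
  rcases pairwise_or_exists_first_violation (flip R) l.reverse with h | ⟨P, u, Q, hl, hP, hs⟩
  · exact Or.inl (pairwise_reverse.1 h)
  · refine Or.inr ⟨Q.reverse, u, P.reverse, ?_, pairwise_reverse.2 hP, ?_⟩
    · rw [← reverse_reverse l, hl]; simp
    · simpa [flip] using hs

theorem exists_eq_append_maximal_suffix (p : α → Prop) (l : List α) :
    ∃ A B, l = A ++ B ∧ (∀ b ∈ B, p b) ∧ (A = [] ∨ ∃ A₀ a, A = A₀ ++ [a] ∧ ¬ p a) := by
  induction l using List.reverseRecOn with
  | nil => exact ⟨[], [], rfl, by simp, Or.inl rfl⟩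
  | append_singleton l x ih =>
    by_cases hx : p x
    · obtain ⟨A, B, rfl, hB, hA⟩ := ih
      refine ⟨A, B ++ [x], by simp, fun b hb => ?_, hA⟩
      rcases mem_append.1 hb with hb | hb
      exacts [hB b hb, mem_singleton.1 hb ▸ hx]
    · exact ⟨l ++ [x], [], by simp, by simp, Or.inr ⟨l, x, rfl, hx⟩⟩

end List

section IncreasingOn

variable {α : Type*} [LinearOrder α]

def IncreasingOn (T : Set α) (l : List α) : Prop :=
  l.Pairwise fun x y => x ∈ T → y ∈ T → x < y

theorem increasingOn_of_sublist {S l : List α} (hl : l.Nodup) (hSl : S.Sublist l)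
    (hS : S.Pairwise (· < ·)) : IncreasingOn {x | x ∈ S} l := by
  induction hSl with
  | slnil => exact .nil
  | cons a hsub ih =>
    rw [List.nodup_cons] at hl
    exact .cons (fun _ _ ha _ => (hl.1 (hsub.subset ha)).elim) (ih hl.2 hS)
  | @cons_cons S l a hsub ih =>
    rw [List.nodup_cons] at hl
    rw [List.pairwise_cons] at hS
    have hmem : ∀ y ∈ l, y ∈ a :: S → y ∈ S := fun y hy hyS =>
      (List.mem_cons.1 hyS).resolve_left fun h => hl.1 (h ▸ hy)
    refine .cons (fun y hy _ hyS => hS.1 y (hmem y hy hyS)) ?_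
    exact (ih hl.2 hS.2).imp_of_mem fun hx hy h hxS hyS => h (hmem _ hx hxS) (hmem _ hy hyS)

theorem increasingOn_reverse_toDual {T : Set α} {l : List α} :
    IncreasingOn (α := αᵒᵈ) T l.reverse ↔ IncreasingOn T l :=
  List.pairwise_reverse.trans <|
    List.Pairwise.iff fun _ _ => ⟨fun h hx hy => h hy hx, fun h hy hx => h hx hy⟩

theorem IncreasingOn.insert_middle {T : Set α} {X Y : List α} {u : α}
    (h : IncreasingOn T (X ++ Y)) (hu : u ∉ X ++ Y)
    (hX : ∀ x ∈ X, x ∈ T → x < u) (hY : ∀ y ∈ Y, y ∈ T → u < y) :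
    IncreasingOn (insert u T) (X ++ u :: Y) := by
  have memX : ∀ x ∈ X, x ∈ insert u T → x ∈ T := fun x hx h =>
    (Set.mem_insert_iff.1 h).resolve_left fun hxu => hu (List.mem_append_left Y (hxu ▸ hx))
  have memY : ∀ y ∈ Y, y ∈ insert u T → y ∈ T := fun y hy h =>
    (Set.mem_insert_iff.1 h).resolve_left fun hyu => hu (List.mem_append_right X (hyu ▸ hy))
  obtain ⟨hX', hY', hXY⟩ := List.pairwise_append.1 h
  refine List.pairwise_append.2 ⟨?_, .cons (fun y hy _ hyT => hY y hy (memY y hy hyT)) ?_, ?_⟩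
  · exact hX'.imp_of_mem fun ha hb hab haT hbT => hab (memX _ ha haT) (memX _ hb hbT)
  · exact hY'.imp_of_mem fun ha hb hab haT hbT => hab (memY _ ha haT) (memY _ hb hbT)
  · intro x hx y hy hxT hyT
    rcases List.mem_cons.1 hy with rfl | hy
    · exact hX x hx (memX x hx hxT)
    · exact hXY x hx y hy (memX x hx hxT) (memY y hy hyT)

theorem IncreasingOn.exists_move_left {T : Set α} {P Q : List α} {u : α}
    (hnd : (P ++ u :: Q).Nodup) (hinc : IncreasingOn T (P ++ u :: Q))
    (hP : P.Pairwise fun s x => s ∈ T → s < x) (hs : ∃ s ∈ P, s ∈ T ∧ ¬ s < u) :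
    u ∉ T ∧ ∃ A B, P = A ++ B ∧ B ≠ [] ∧ (∀ b ∈ B, u < b) ∧
      IncreasingOn (insert u T) (A ++ u :: (B ++ Q)) := by
  obtain ⟨s, hsP, hsT, hsu⟩ := hs
  have hbefore : ∀ x ∈ P, ∀ y ∈ u :: Q, x ∈ T → y ∈ T → x < y :=
    (List.pairwise_append.1 hinc).2.2
  have huT : u ∉ T := fun huT => hsu (hbefore s hsP u List.mem_cons_self hsT huT)
  have hus : u < s := lt_of_le_of_ne (not_lt.1 hsu) fun h => huT (h ▸ hsT)
  obtain ⟨A, B, rfl, hB, hA⟩ := List.exists_eq_append_maximal_suffix (u < ·) P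
  have hAT : ∀ t ∈ A, t ∈ T → t < u := by
    rcases hA with rfl | ⟨A₀, a, rfl, hau⟩
    · simp
    · intro t ht htT
      rcases List.mem_append.1 ht with ht | ht
      · have hta := (List.pairwise_append.1 (List.pairwise_append.1 hP).1).2.2 t ht a
          (List.mem_singleton_self a) htT
        exact hta.trans_le (not_lt.1 hau)
      · rw [List.mem_singleton.1 ht] at htT ⊢
        exact lt_of_le_of_ne (not_lt.1 hau) fun h => huT (h ▸ htT)
  have hsB : s ∈ B :=
    (List.mem_append.1 hsP).resolve_left fun hsA => (hAT s hsA hsT).not_gt hus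
  have hBQ : ∀ y ∈ B ++ Q, y ∈ T → u < y := by
    intro y hy hyT
    rcases List.mem_append.1 hy with hy | hy
    · exact hB y hy
    · exact hus.trans (hbefore s hsP y (List.mem_cons_of_mem u hy) hsT hyT)
  have hu : u ∉ A ++ (B ++ Q) := by
    simpa using (List.nodup_cons.1 (List.nodup_middle.1 hnd)).1
  exact ⟨huT, A, B, rfl, List.ne_nil_of_mem hsB, hB,
    IncreasingOn.insert_middle (hinc.sublist (by simp)) hu hAT hBQ⟩

theorem IncreasingOn.exists_move_right {T : Set α} {P Q : List α} {u : α}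
    (hnd : (P ++ u :: Q).Nodup) (hinc : IncreasingOn T (P ++ u :: Q))
    (hQ : Q.Pairwise fun x s => s ∈ T → x < s) (hs : ∃ s ∈ Q, s ∈ T ∧ ¬ u < s) :
    u ∉ T ∧ ∃ B D, Q = B ++ D ∧ B ≠ [] ∧ (∀ b ∈ B, b < u) ∧
      IncreasingOn (insert u T) (P ++ B ++ u :: D) := by
  have hrev : (P ++ u :: Q).reverse = Q.reverse ++ u :: P.reverse := by simp
  obtain ⟨s, hsQ, hsT, hus⟩ := hs
  -- `A` and `B` come out as lists over `αᵒᵈ`; they and the list in `hinc'` are retyped over `α`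
  -- so that the list lemmas below apply to them.
  obtain ⟨huT, (A : List α), (B : List α), hQAB, hB, hBu, hinc'⟩ :=
    IncreasingOn.exists_move_left (α := αᵒᵈ) (P := Q.reverse) (Q := P.reverse) (u := u)
      (hrev ▸ List.nodup_reverse.2 hnd) (hrev ▸ increasingOn_reverse_toDual.2 hinc)
      (List.pairwise_reverse.2 hQ) ⟨s, List.mem_reverse.2 hsQ, hsT, hus⟩
  change IncreasingOn (α := αᵒᵈ) (insert u T : Set α) (A ++ u :: (B ++ P.reverse))
    at hinc'
  refine ⟨huT, B.reverse, A.reverse, List.reverse_eq_append_iff.1 hQAB,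
    List.reverse_ne_nil_iff.2 hB, fun b hb => hBu b (List.mem_reverse.1 hb), ?_⟩
  rw [show A ++ u :: (B ++ P.reverse) = (P ++ B.reverse ++ u :: A.reverse).reverse by
    simp] at hinc'
  exact increasingOn_reverse_toDual.1 hinc'

end IncreasingOn

theorem exists_sublist_pairwise_lt_length_eq_lis (l : List ℕ) :
    ∃ S : List ℕ, S.Sublist l ∧ S.Pairwise (· < ·) ∧ S.length = lis l := by
  set L := (l.sublists.filter fun s => decide (List.IsChain (· < ·) s)).map List.length
  have hL : L ≠ [] := List.ne_nil_of_mem (a := 0) (List.mem_map.2 ⟨[], by simp, rfl⟩)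
  obtain ⟨S, hS, hlen⟩ := List.mem_map.1 (List.maximum_mem (List.foldr_max_of_ne_nil hL).symm)
  rw [List.mem_filter, List.mem_sublists, decide_eq_true_iff, List.isChain_iff_pairwise] at hS
  exact ⟨S, hS.1, hS.2, hlen⟩

theorem pairwise_lt_idL (n : ℕ) : (idL n).Pairwise (· < ·) :=
  List.pairwise_lt_range.map _ fun _ _ => Nat.succ_lt_succ

theorem eq_idL_of_perm_of_pairwise_lt {n : ℕ} {l : List ℕ} (hl : l.Perm (idL n))
    (hlt : l.Pairwise (· < ·)) : l = idL n :=
  hlt.eq_of_mem_iff (pairwise_lt_idL n) fun _ => hl.mem_iff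

theorem IsMonotoneBlockMove.perm {l l' : List ℕ} (h : IsMonotoneBlockMove l l') : l.Perm l' := by
  obtain ⟨A, B, C, D, -, -, -, rfl, rfl⟩ := h
  simpa using ((List.perm_append_comm (l₁ := B) (l₂ := C)).append_left A).append_right D

theorem SortsIn.cons {R : List ℕ → List ℕ → Prop} {l l' target : List ℕ} {t : ℕ}
    (h : R l l') (h' : SortsIn R l' target t) : SortsIn R l target (t + 1) := by
  obtain ⟨c, rfl, hct, hc⟩ := h'
  refine ⟨fun i => Nat.casesOn i l c, rfl, hct, ?_⟩
  rintro (_ | i) hi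
  · exact h
  · exact hc i (by omega)

theorem IncreasingOn.exists_move_insert {T : Set ℕ} {l : List ℕ} (hnd : l.Nodup)
    (hinc : IncreasingOn T l) (hmiss : ∃ u ∈ l, u ∉ T) :
    ∃ u ∈ l, u ∉ T ∧ ∃ l', Relation.ReflGen IsMonotoneBlockMove l l' ∧
      IncreasingOn (insert u T) l' := by
  rcases List.pairwise_or_exists_first_violation (fun s x => s ∈ T → s < x) l with
    hlow | ⟨P, u, Q, rfl, hP, hs⟩
  swap
  · obtain ⟨huT, A, B, rfl, hB, hBu, hinc'⟩ :=
      hinc.exists_move_left hnd hP (by simpa using hs)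
    refine ⟨u, by simp, huT, _, .single ⟨A, B, [u], Q, hB, by simp, ?_, by simp, by simp⟩, hinc'⟩
    exact fun x hx y hy => List.mem_singleton.1 hy ▸ hBu x hx
  rcases List.pairwise_or_exists_last_violation (fun x s => s ∈ T → x < s) l with
    hhigh | ⟨P, u, Q, rfl, hQ, hs⟩
  swap
  · obtain ⟨huT, B, D, rfl, hB, hBu, hinc'⟩ :=
      hinc.exists_move_right hnd hQ (by simpa using hs)
    refine ⟨u, by simp, huT, _, .single ⟨P, [u], B, D, by simp, hB, ?_, by simp, by simp⟩, hinc'⟩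
    exact fun x hx y hy => List.mem_singleton.1 hx ▸ hBu y hy
  obtain ⟨u, hul, huT⟩ := hmiss
  obtain ⟨P, Q, rfl⟩ := List.append_of_mem hul
  refine ⟨u, hul, huT, _, .refl, IncreasingOn.insert_middle (hinc.sublist (by simp))
    (List.nodup_cons.1 (List.nodup_middle.1 hnd)).1 ?_ ?_⟩
  · exact fun x hx hxT => (List.pairwise_append.1 hlow).2.2 x hx u List.mem_cons_self hxT
  · exact fun y hy hyT => (List.pairwise_cons.1 (List.pairwise_append.1 hhigh).2.1).1 y hy hyT

theorem exists_sortsIn_of_increasingOn {n : ℕ} {l : List ℕ} (T : Finset ℕ)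
    (hl : l.Perm (idL n)) (hinc : IncreasingOn (T : Set ℕ) l) :
    ∃ t ≤ (l.toFinset \ T).card, SortsIn IsMonotoneBlockMove l (idL n) t := by
  have hnd : l.Nodup := hl.nodup_iff.2 (pairwise_lt_idL n).nodup
  induction hk : (l.toFinset \ T).card generalizing l T with
  | zero =>
    have hlT : ∀ x ∈ l, x ∈ T := by
      simpa [Finset.sdiff_eq_empty_iff_subset, Finset.subset_iff] using hk
    have hlt : l.Pairwise (· < ·) := hinc.imp_of_mem fun ha hb h => h (hlT _ ha) (hlT _ hb)
    exact ⟨0, le_rfl, fun _ => l, rfl, eq_idL_of_perm_of_pairwise_lt hl hlt, by simp⟩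
  | succ k ih =>
    obtain ⟨u, hu⟩ := Finset.card_pos.1 (by omega : 0 < (l.toFinset \ T).card)
    simp only [Finset.mem_sdiff, List.mem_toFinset] at hu
    obtain ⟨u, hul, huT, l', hmove, hinc'⟩ := hinc.exists_move_insert hnd ⟨u, hu.1, hu.2⟩
    have hperm : l'.Perm l := by
      rcases hmove with _ | hmove
      exacts [.refl l, hmove.perm.symm]
    have hk' : (l'.toFinset \ insert u T).card = k := by
      rw [List.toFinset_eq_of_perm _ _ hperm, Finset.sdiff_insert, Finset.card_erase_of_mem
        (Finset.mem_sdiff.2 ⟨List.mem_toFinset.2 hul, huT⟩), hk, Nat.add_sub_cancel]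
    obtain ⟨t, ht, hsort⟩ := ih (insert u T) (hperm.trans hl) (by rwa [Finset.coe_insert])
      (hperm.nodup_iff.2 hnd) hk'
    rcases hmove with _ | hmove
    · exact ⟨t, by omega, hsort⟩
    · exact ⟨t + 1, by omega, hsort.cons hmove⟩

/-- Any permutation of `n` elements can be sorted to the identity by at most
`n - lis(π)` monotone block moves. -/
theorem sorting_upper_bound_lis (n : ℕ) (l : List ℕ) (hl : IsPermList n l) :
    ∃ t ≤ n - lis l, SortsIn IsMonotoneBlockMove l (idL n) t := by
  obtain ⟨S, hSl, hS, hlis⟩ := exists_sublist_pairwise_lt_length_eq_lis l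
  have hnd : l.Nodup := hl.nodup_iff.2 (pairwise_lt_idL n).nodup
  have hinc : IncreasingOn (S.toFinset : Set ℕ) l := by
    simpa using increasingOn_of_sublist hnd hSl hS
  obtain ⟨t, ht, hsort⟩ := exists_sortsIn_of_increasingOn S.toFinset hl hinc
  have hcard : (l.toFinset \ S.toFinset).card = n - lis l := by
    rw [Finset.card_sdiff_of_subset (fun x hx =>
      List.mem_toFinset.2 (hSl.subset (List.mem_toFinset.1 hx))),
      List.toFinset_card_of_nodup hnd, List.toFinset_card_of_nodup (hnd.sublist hSl),
      hl.length_eq, hlis]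
    simp [idL]
  exact ⟨t, hcard ▸ ht, hsort⟩
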